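/- Let $D \subset \mathbb{R}^m$ be open, $F : D \to [-\infty, +\infty]$ locally Lebesgue-integrable, and $d : D \to (0, +\infty)$ continuous with $d(z) < \operatorname{dist}(z, \mathbb{R}^m \setminus D)$ for all $z \in D$. Define $F^{*d}(z) := \frac{1}{\lambda(B(0, d(z)))} \int_{B(z, d(z))} F\, d\lambda$. Then $F^{*d}$ is a real-valued (finite) function on $D$ that is locally integrable on $D$. -/

import Mathlib

open MeasureTheory Metric Filter Topology

/-! The average is continuous on `D`, hence locally integrable. Continuity of the normalising
factor comes from `λ(B(0, ρ)) = ρᵐ λ(B(0, 1))`. For the integral, near `z₀` every ball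
`B(z, d z)` lies in a fixed ball `B(z₀, R)` compactly contained in `D`, so `|F| 𝟙_{B(z₀,R)}`
is an integrable dominating function, and off the null sphere `∂B(z₀, d z₀)` the indicators
of `B(z, d z)` converge pointwise as `z → z₀`. -/

section Balls

variable {X : Type*} [PseudoMetricSpace X] {r : X → ℝ} {z₀ : X}

theorem eventually_ball_subset_ball (hr : ContinuousAt r z₀) {R : ℝ} (hR : r z₀ < R) :
    ∀ᶠ z in 𝓝 z₀, ball z (r z) ⊆ ball z₀ R := by
  have hcont : ContinuousAt (fun z => r z + dist z z₀) z₀ :=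
    hr.add (continuous_id.dist continuous_const).continuousAt
  filter_upwards [hcont.eventually_lt continuousAt_const (by simpa using hR)] with z hz
  exact ball_subset_ball' hz.le

theorem eventually_mem_ball_iff (hr : ContinuousAt r z₀) {x : X} (hx : dist x z₀ ≠ r z₀) :
    ∀ᶠ z in 𝓝 z₀, x ∈ ball z (r z) ↔ x ∈ ball z₀ (r z₀) := by
  have hdist : ContinuousAt (fun z => dist x z) z₀ :=
    (continuous_const.dist continuous_id).continuousAt
  rcases hx.lt_or_gt with hlt | hgt
  · filter_upwards [hdist.eventually_lt hr hlt] with z hz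
    simp only [mem_ball, hz, hlt]
  · filter_upwards [hr.eventually_lt hdist hgt] with z hz
    simp only [mem_ball, not_lt.mpr hz.le, not_lt.mpr hgt.le]

end Balls

section AddHaar

variable {E G : Type*} [NormedAddCommGroup E] [NormedSpace ℝ E] [MeasurableSpace E]
  [BorelSpace E] [FiniteDimensional ℝ E] (μ : Measure E) [μ.IsAddHaarMeasure]
  [NormedAddCommGroup G] [NormedSpace ℝ G]

theorem continuousAt_measure_ball_toReal (x : E) {ρ : ℝ} (hρ : 0 < ρ) :
    ContinuousAt (fun ρ => (μ (ball x ρ)).toReal) ρ := by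
  have hpoly : ContinuousAt
      (fun ρ : ℝ => ρ ^ Module.finrank ℝ E * (μ (ball (0 : E) 1)).toReal) ρ := by fun_prop
  refine hpoly.congr ?_
  filter_upwards [eventually_gt_nhds hρ] with ρ' hρ'
  rw [Measure.addHaar_ball_of_pos μ x hρ', ENNReal.toReal_mul,
    ENNReal.toReal_ofReal (by positivity)]

theorem continuousAt_setIntegral_ball {f : E → G} {r : E → ℝ} {z₀ : E} {R : ℝ}
    (hf : IntegrableOn f (ball z₀ R) μ) (hr : ContinuousAt r z₀) (hr0 : r z₀ ≠ 0)
    (hR : r z₀ < R) :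
    ContinuousAt (fun z => ∫ x in ball z (r z), f x ∂μ) z₀ := by
  have hsub := eventually_ball_subset_ball hr hR
  simp only [ContinuousAt, ← integral_indicator measurableSet_ball]
  refine tendsto_integral_filter_of_dominated_convergence
    ((ball z₀ R).indicator fun x => ‖f x‖) ?_ ?_
    (IntegrableOn.integrable_indicator hf.norm measurableSet_ball) ?_
  · filter_upwards [hsub] with z hz
    exact ((hf.mono_set hz).integrable_indicator measurableSet_ball).aestronglyMeasurable
  · filter_upwards [hsub] with z hz
    refine .of_forall fun x => ?_
    rw [← norm_indicator_eq_indicator_norm]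
    exact norm_indicator_le_of_subset hz f x
  · filter_upwards [measure_eq_zero_iff_ae_notMem.mp
      (Measure.addHaar_sphere_of_ne_zero μ z₀ hr0)] with x hx
    refine tendsto_const_nhds.congr' ?_
    filter_upwards [eventually_mem_ball_iff hr (mt mem_sphere.mpr hx)] with z hz
    classical
    simp only [Set.indicator_apply, hz]

end AddHaar

/-- For `F` locally integrable on an open set `D ⊆ ℝᵐ` and a continuous radius
function `d` with `0 < d z < dist(z, ∁D)` on `D`, the variable-radius ball
average `F^{*d}(z) = (1/λ(B(0,d(z)))) ∫_{B(z,d(z))} F dλ` is a (finite)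
real-valued function that is locally integrable on `D`. -/
theorem variable_average_locallyIntegrable {m : ℕ}
    (D : Set (EuclideanSpace ℝ (Fin m))) (hD : IsOpen D)
    (F : EuclideanSpace ℝ (Fin m) → ℝ) (hF : LocallyIntegrableOn F D volume)
    (d : EuclideanSpace ℝ (Fin m) → ℝ) (hd : ContinuousOn d D)
    (hd0 : ∀ z ∈ D, 0 < d z) (hdD : ∀ z ∈ D, d z < infDist z Dᶜ) :
    LocallyIntegrableOn
      (fun z => (volume (ball (0 : EuclideanSpace ℝ (Fin m)) (d z))).toReal⁻¹ *
        ∫ x in ball z (d z), F x) D volume := by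
  refine ContinuousOn.locallyIntegrableOn
    (continuousOn_of_forall_continuousAt fun z hz => ?_) hD.measurableSet
  have hdz : ContinuousAt d z := (hd z hz).continuousAt (hD.mem_nhds hz)
  obtain ⟨R, hdR, hRD⟩ := exists_between (hdD z hz)
  have hFR : IntegrableOn F (ball z R) volume :=
    (hF.integrableOn_compact_subset
      ((closedBall_subset_ball hRD).trans ball_infDist_compl_subset)
      (isCompact_closedBall z R)).mono_set ball_subset_closedBall
  have hvol : ContinuousAt
      (fun z => (volume (ball (0 : EuclideanSpace ℝ (Fin m)) (d z))).toReal) z :=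
    (continuousAt_measure_ball_toReal volume 0 (hd0 z hz)).comp hdz
  refine (hvol.inv₀ ?_).mul
    (continuousAt_setIntegral_ball volume hFR hdz (hd0 z hz).ne' hdR)
  exact (ENNReal.toReal_pos (measure_ball_pos _ _ (hd0 z hz)).ne' measure_ball_lt_top.ne).ne'
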